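/- Let G be a finite graph, G_X and G_Y subgraphs with G = G_X ∪ G_Y, such that for every connected component U of G_X, the intersection of the component G_X[U] with G_Y is connected. If B_X and B_Y generate the cycle spaces of G_X and G_Y respectively, then B_X ∪ B_Y generates the cycle space of G; in particular bn(G) ≤ bn(G_X) + bn(G_Y). -/

import Mathlib

variable {V : Type*} [Fintype V] [DecidableEq V]

/-- An F2-cycle relative to an edge set `E`: a finite set of edges, all belonging to `E`,
in which every vertex has even degree. -/
def IsF2CycleIn (E : Set (Sym2 V)) (C : Finset (Sym2 V)) : Prop :=
  (∀ e ∈ C, e ∈ E) ∧ ∀ v : V, Even ((C.filter (fun e => v ∈ e)).card)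

/-- `B` generates the cycle space of the graph with edge set `E`: every F2-cycle is a
symmetric difference of a subfamily of `B`. -/
def GeneratesIn (E : Set (Sym2 V)) (B : List (Finset (Sym2 V))) : Prop :=
  ∀ C : Finset (Sym2 V), IsF2CycleIn E C →
    ∃ l : List (Finset (Sym2 V)), l.Sublist B ∧ C = l.foldr symmDiff ∅

/-- The basis number of the graph with edge set `E`: the least `k` such that some
family of F2-cycles generating the cycle space uses each edge at most `k` times. -/
noncomputable def bnSet (E : Set (Sym2 V)) : ℕ :=
  sInf {k | ∃ B : List (Finset (Sym2 V)), (∀ X ∈ B, IsF2CycleIn E X) ∧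
    GeneratesIn E B ∧ ∀ e : Sym2 V, B.countP (fun X => decide (e ∈ X)) ≤ k}

/-- The basis number of a graph. -/
noncomputable def SimpleGraph.bn (G : SimpleGraph V) : ℕ := bnSet G.edgeSet
/-- `U` is (the vertex set of) a connected component of the subgraph `H`:
`U` induces a connected subgraph and is maximal with this property. -/
def SimpleGraph.Subgraph.IsCompOf {G : SimpleGraph V} (H : G.Subgraph) (U : Set V) : Prop :=
  (H.induce U).Connected ∧ U ⊆ H.verts ∧
    ∀ U' : Set V, U ⊆ U' → U' ⊆ H.verts → (H.induce U').Connected → U' = U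

/-! Let `C` be an F2-cycle of `G` and `A` its part in `G_X`. Since `C` has no odd vertices, `A` and
`C \ A` have the same odd vertices, so these lie in both `G_X` and `G_Y`; by the handshake lemma
each component `U` of `G_X` contains an even number of them. Pairing them up inside each `U` and
joining every pair by a path of the connected graph `G_X[U] ∩ G_Y` yields `T ⊆ E(G_X) ∩ E(G_Y)`
with the same odd vertices as `A`. Then `A ∆ T` is a cycle of `G_X`, `(C \ A) ∆ T` a cycle of
`G_Y`, and their sum is `C`. Concatenating optimal families for `G_X` and `G_Y` then gives the
bound on basis numbers. -/

open Finset
open scoped symmDiff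

theorem Finset.odd_card_symmDiff_iff {α : Type*} [DecidableEq α] (s t : Finset α) :
    Odd #(s ∆ t) ↔ ¬(Odd #s ↔ Odd #t) := by
  have h : #(s ∆ t) + 2 * #(s ∩ t) = #s + #t := by
    have hs := card_sdiff_add_card_inter s t
    have ht := card_sdiff_add_card_inter t s
    rw [inter_comm] at ht
    rw [symmDiff_def, sup_eq_union, card_union_of_disjoint disjoint_sdiff_sdiff]
    omega
  simp only [Nat.odd_iff]
  omega

def oddVerts (C : Finset (Sym2 V)) : Finset V :=
  univ.filter fun v => Odd #(C.filter fun e => v ∈ e)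

@[simp]
theorem mem_oddVerts {C : Finset (Sym2 V)} {v : V} :
    v ∈ oddVerts C ↔ Odd #(C.filter fun e => v ∈ e) := by
  simp [oddVerts]

theorem isF2CycleIn_iff {E : Set (Sym2 V)} {C : Finset (Sym2 V)} :
    IsF2CycleIn E C ↔ ↑C ⊆ E ∧ oddVerts C = ∅ := by
  simp [IsF2CycleIn, eq_empty_iff_forall_notMem, Set.subset_def]

theorem oddVerts_symmDiff (A B : Finset (Sym2 V)) :
    oddVerts (A ∆ B) = oddVerts A ∆ oddVerts B := by
  ext v
  have hfilter : (A ∆ B).filter (fun e => v ∈ e) = A.filter (v ∈ ·) ∆ B.filter (v ∈ ·) := by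
    ext e
    simp only [mem_filter, mem_symmDiff]
    tauto
  rw [mem_symmDiff, mem_oddVerts, mem_oddVerts, mem_oddVerts, hfilter, odd_card_symmDiff_iff]
  tauto

@[simp]
theorem oddVerts_empty : oddVerts (∅ : Finset (Sym2 V)) = ∅ := by
  simp [oddVerts]

theorem oddVerts_singleton (a b : V) : oddVerts {s(a, b)} = {a, b} := by
  ext v
  by_cases hv : v ∈ s(a, b) <;> simp_all [filter_singleton]

theorem even_card_oddVerts {C : Finset (Sym2 V)} (hC : ∀ e ∈ C, ¬e.IsDiag) :
    Even #(oddVerts C) := by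
  induction C using Finset.induction_on with
  | empty => simp
  | insert e C heC ih =>
    induction e with
    | h a b =>
      have hab : a ≠ b := fun h => hC _ (mem_insert_self _ _) (by simp [h])
      rw [insert_eq, ← sup_eq_union, ← (disjoint_singleton_left.2 heC).symmDiff_eq_sup,
        oddVerts_symmDiff, oddVerts_singleton, ← Nat.not_odd_iff_even, odd_card_symmDiff_iff,
        card_pair hab]
      have hC' := Nat.not_odd_iff_even.2 (ih fun e he => hC e (mem_insert_of_mem he))
      have h2 : ¬Odd 2 := by decide
      tauto

def CyclesDecompose (E EX EY : Set (Sym2 V)) : Prop :=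
  ∀ C, IsF2CycleIn E C →
    ∃ CX CY, IsF2CycleIn EX CX ∧ IsF2CycleIn EY CY ∧ CX ∆ CY = C

theorem List.foldr_symmDiff_append {α : Type*} [DecidableEq α] (l₁ l₂ : List (Finset α)) :
    (l₁ ++ l₂).foldr symmDiff ∅ = l₁.foldr symmDiff ∅ ∆ l₂.foldr symmDiff ∅ := by
  induction l₁ with
  | nil => exact (bot_symmDiff _).symm
  | cons X l ih => rw [List.cons_append, foldr_cons, foldr_cons, ih, symmDiff_assoc]

theorem IsF2CycleIn.mono {W : Type*} [DecidableEq W] {E F : Set (Sym2 W)} {C : Finset (Sym2 W)}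
    (hC : IsF2CycleIn E C) (hEF : E ⊆ F) : IsF2CycleIn F C :=
  ⟨fun e he => hEF (hC.1 e he), hC.2⟩

theorem CyclesDecompose.generatesIn_append {W : Type*} [DecidableEq W] {E EX EY : Set (Sym2 W)}
    (hdec : CyclesDecompose E EX EY) {BX BY : List (Finset (Sym2 W))}
    (hBX : GeneratesIn EX BX) (hBY : GeneratesIn EY BY) : GeneratesIn E (BX ++ BY) := by
  intro C hC
  obtain ⟨CX, CY, hCX, hCY, rfl⟩ := hdec C hC
  obtain ⟨lX, hlX, rfl⟩ := hBX CX hCX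
  obtain ⟨lY, hlY, rfl⟩ := hBY CY hCY
  exact ⟨lX ++ lY, hlX.append hlY, (List.foldr_symmDiff_append lX lY).symm⟩

open scoped Classical in
theorem exists_countP_le_bnSet (E : Set (Sym2 V)) :
    ∃ B : List (Finset (Sym2 V)), (∀ X ∈ B, IsF2CycleIn E X) ∧ GeneratesIn E B ∧
      ∀ e : Sym2 V, B.countP (fun X => decide (e ∈ X)) ≤ bnSet E := by
  have hne : {k | ∃ B : List (Finset (Sym2 V)), (∀ X ∈ B, IsF2CycleIn E X) ∧ GeneratesIn E B ∧
      ∀ e : Sym2 V, B.countP (fun X => decide (e ∈ X)) ≤ k}.Nonempty := by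
    refine ⟨_, (univ.filter (IsF2CycleIn E)).toList, by simp, fun C hC => ?_,
      fun e => List.countP_le_length⟩
    exact ⟨[C], List.singleton_sublist.2 (by simpa using hC), (symmDiff_bot C).symm⟩
  exact Nat.sInf_mem hne

theorem CyclesDecompose.bnSet_le_add {E EX EY : Set (Sym2 V)} (hdec : CyclesDecompose E EX EY)
    (hEX : EX ⊆ E) (hEY : EY ⊆ E) : bnSet E ≤ bnSet EX + bnSet EY := by
  obtain ⟨BX, hBXc, hBXg, hBXk⟩ := exists_countP_le_bnSet EX
  obtain ⟨BY, hBYc, hBYg, hBYk⟩ := exists_countP_le_bnSet EY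
  refine Nat.sInf_le ⟨BX ++ BY, fun X hX => ?_, hdec.generatesIn_append hBXg hBYg, fun e => ?_⟩
  · rcases List.mem_append.1 hX with hX | hX
    exacts [(hBXc X hX).mono hEX, (hBYc X hX).mono hEY]
  · rw [List.countP_append]
    exact add_le_add (hBXk e) (hBYk e)

namespace SimpleGraph

theorem reachable_of_mem_edgeSet {W : Type*} {H : SimpleGraph W} {e : Sym2 W}
    (he : e ∈ H.edgeSet) {x y : W} (hx : x ∈ e) (hy : y ∈ e) : H.Reachable x y := by
  induction e with
  | h a b =>
    have hab : H.Reachable a b := (mem_edgeSet H).1 he |>.reachable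
    rcases Sym2.mem_iff.1 hx with rfl | rfl <;> rcases Sym2.mem_iff.1 hy with rfl | rfl
    exacts [.refl _, hab, hab.symm, .refl _]

open scoped Classical in
theorem even_card_filter_oddVerts (H : SimpleGraph V) {C : Finset (Sym2 V)}
    (hC : ↑C ⊆ H.edgeSet) (z : V) : Even #((oddVerts C).filter (H.Reachable z)) := by
  have hfilter : (oddVerts C).filter (H.Reachable z) =
      oddVerts (C.filter fun e => ∃ x ∈ e, H.Reachable z x) := by
    ext w
    simp only [mem_filter, mem_oddVerts, filter_filter]
    by_cases hw : H.Reachable z w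
    · rw [filter_congr fun e _ => show ((∃ x ∈ e, H.Reachable z x) ∧ w ∈ e) ↔ w ∈ e from
        ⟨And.right, fun h => ⟨⟨w, h, hw⟩, h⟩⟩]
      simp [hw]
    · have hempty : C.filter (fun e => (∃ x ∈ e, H.Reachable z x) ∧ w ∈ e) = ∅ := by
        refine filter_eq_empty_iff.2 ?_
        rintro e he ⟨⟨x, hx, hzx⟩, hwe⟩
        exact hw (hzx.trans (reachable_of_mem_edgeSet (hC he) hx hwe))
      simp [hw, hempty]
  rw [hfilter]
  exact even_card_oddVerts fun e he => H.not_isDiag_of_mem_edgeSet (hC (mem_filter.1 he).1)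

open scoped Classical in
theorem exists_oddVerts_eq_of_even (H : SimpleGraph V) (E : Set (Sym2 V)) (S : Finset V)
    (hjoin : ∀ a ∈ S, ∀ b ∈ S, a ≠ b → H.Reachable a b →
      ∃ T : Finset (Sym2 V), ↑T ⊆ E ∧ oddVerts T = {a, b})
    (heven : ∀ z, Even #(S.filter (H.Reachable z))) :
    ∃ T : Finset (Sym2 V), ↑T ⊆ E ∧ oddVerts T = S := by
  induction S using Finset.strongInduction with
  | H S ih =>
    obtain rfl | ⟨a, ha⟩ := S.eq_empty_or_nonempty
    · exact ⟨∅, by simp⟩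
    have haS : a ∈ S.filter (H.Reachable a) := mem_filter.2 ⟨ha, .refl a⟩
    obtain ⟨b, hb, hba⟩ : ∃ b ∈ S.filter (H.Reachable a), b ≠ a := by
      refine exists_mem_ne ?_ a
      obtain ⟨k, hk⟩ := heven a
      have := card_pos.2 ⟨a, haS⟩
      omega
    obtain ⟨hbS, hreach⟩ := mem_filter.1 hb
    have hpair : {a, b} ⊆ S := insert_subset ha (singleton_subset_iff.2 hbS)
    have heven' : ∀ z, Even #((S \ {a, b}).filter (H.Reachable z)) := by
      intro z
      have hsub := filter_subset_filter (H.Reachable z) hpair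
      have hfilter : (S \ {a, b}).filter (H.Reachable z) =
          S.filter (H.Reachable z) \ ({a, b} : Finset V).filter (H.Reachable z) := by
        ext
        simp only [mem_filter, mem_sdiff]
        tauto
      have hpair_even : Even #(({a, b} : Finset V).filter (H.Reachable z)) := by
        by_cases hza : H.Reachable z a
        · rw [filter_true_of_mem (by simp [hza, hza.trans hreach]), card_pair hba.symm]
          exact even_two
        · have hzb : ¬H.Reachable z b := fun hzb => hza (hzb.trans hreach.symm)
          rw [filter_false_of_mem (by simp [hza, hzb])]
          simp
      rw [hfilter, card_sdiff_of_subset hsub, Nat.even_sub (card_le_card hsub)]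
      exact iff_of_true (heven z) hpair_even
    obtain ⟨T₁, hT₁, hT₁odd⟩ := hjoin a ha b hbS hba.symm hreach
    obtain ⟨T₂, hT₂, hT₂odd⟩ := ih (S \ {a, b}) (sdiff_ssubset hpair (by simp))
      (fun x hx y hy => hjoin x (mem_sdiff.1 hx).1 y (mem_sdiff.1 hy).1) heven'
    refine ⟨T₁ ∆ T₂, ?_, ?_⟩
    · rw [coe_symmDiff]
      exact symmDiff_le_sup.trans (sup_le hT₁ hT₂)
    · rw [oddVerts_symmDiff, hT₁odd, hT₂odd, disjoint_sdiff.symmDiff_eq_sup, sup_eq_union,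
        union_sdiff_of_subset hpair]

theorem Walk.IsTrail.oddVerts_edges_toFinset {G : SimpleGraph V} {u v : V} {p : G.Walk u v}
    (hp : p.IsTrail) (huv : u ≠ v) : oddVerts p.edges.toFinset = {u, v} := by
  ext x
  have hcard : #(p.edges.toFinset.filter fun e => x ∈ e) = p.edges.countP fun e => x ∈ e := by
    rw [List.countP_eq_length_filter, ← List.toFinset_card_of_nodup (hp.edges_nodup.filter _)]
    congr 1
    ext
    simp
  rw [mem_oddVerts, hcard, ← Nat.not_even_iff_odd, hp.even_countP_edges_iff x]
  simp only [mem_insert, mem_singleton]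
  tauto

theorem Subgraph.Connected.exists_isPath {W : Type*} [DecidableEq W] {G : SimpleGraph W}
    {H : G.Subgraph} (hH : H.Connected) {u v : W} (hu : u ∈ H.verts) (hv : v ∈ H.verts) :
    ∃ p : G.Walk u v, p.IsPath ∧ ∀ e ∈ p.edges, e ∈ H.edgeSet := by
  obtain ⟨p, hp⟩ := (Subgraph.connected_iff_forall_exists_walk_subgraph H).1 hH |>.2 hu hv
  refine ⟨p.bypass, p.bypass_isPath, fun e he => Subgraph.edgeSet_mono hp ?_⟩
  rw [Walk.edgeSet_toSubgraph]
  exact p.edges_bypass_subset_edges he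

theorem Subgraph.mem_verts_of_mem_oddVerts {G : SimpleGraph V} {H : G.Subgraph}
    {C : Finset (Sym2 V)} (hC : ↑C ⊆ H.edgeSet) {v : V} (hv : v ∈ oddVerts C) : v ∈ H.verts := by
  obtain ⟨e, he⟩ := card_pos.1 (mem_oddVerts.1 hv).pos
  rw [mem_filter] at he
  exact H.mem_verts_of_mem_edge (hC he.1) he.2

theorem Subgraph.isCompOf_supp_connectedComponentMk {W : Type*} {G : SimpleGraph W}
    {H : G.Subgraph} {v : W} (hv : v ∈ H.verts) :
    H.IsCompOf (H.spanningCoe.connectedComponentMk v).supp := by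
  set c := H.spanningCoe.connectedComponentMk v
  have hsupp : c.supp ⊆ H.verts := by
    intro w hw
    obtain ⟨p⟩ := ConnectedComponent.exact hw
    by_cases hp : p.Nil
    · exact hp.eq ▸ hv
    · have hadj := p.adj_snd hp
      rw [Subgraph.spanningCoe_adj] at hadj
      exact hadj.fst_mem
  refine ⟨?_, hsupp, fun U' hU hU' hconn => subset_antisymm (fun w hw => ?_) hU⟩
  · let f : c.toSimpleGraph →g (H.induce c.supp).coe := ⟨id, fun {x y} hxy => ⟨x.2, y.2, hxy⟩⟩
    exact Subgraph.connected_iff'.2 (c.connected_toSimpleGraph.map f Function.surjective_id)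
  · let f : (H.induce U').coe →g H.spanningCoe := ⟨Subtype.val, fun {x y} hxy => hxy.2.2⟩
    have hvw := (Subgraph.connected_iff'.1 hconn).preconnected ⟨v, hU rfl⟩ ⟨w, hw⟩ |>.map f
    exact ConnectedComponent.eq.2 hvw.symm

section Decomposition

variable {G : SimpleGraph V} {GX GY : G.Subgraph}

theorem exists_oddVerts_eq_pair_of_reachable
    (hcomp : ∀ U : Set V, GX.IsCompOf U → ((GX.induce U) ⊓ GY).Connected) {a b : V}
    (ha : a ∈ GX.verts) (haY : a ∈ GY.verts) (hbY : b ∈ GY.verts) (hab : a ≠ b)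
    (hreach : GX.spanningCoe.Reachable a b) :
    ∃ T : Finset (Sym2 V), ↑T ⊆ GX.edgeSet ∩ GY.edgeSet ∧ oddVerts T = {a, b} := by
  set U := (GX.spanningCoe.connectedComponentMk a).supp
  have hU : GX.IsCompOf U := Subgraph.isCompOf_supp_connectedComponentMk ha
  have hbU : b ∈ U := ConnectedComponent.eq.2 hreach.symm
  obtain ⟨p, hp, hpE⟩ := (hcomp U hU).exists_isPath ⟨rfl, haY⟩ ⟨hbU, hbY⟩
  refine ⟨p.edges.toFinset, fun e he => ?_, hp.isTrail.oddVerts_edges_toFinset hab⟩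
  have he' := hpE e (List.mem_toFinset.1 he)
  rw [Subgraph.edgeSet_inf] at he'
  have hle : GX.induce U ≤ GX :=
    (Subgraph.induce_mono_right hU.2.1).trans_eq GX.induce_self_verts
  exact ⟨Subgraph.edgeSet_mono hle he'.1, he'.2⟩

open scoped Classical in
theorem cyclesDecompose_of_isCompOf_connected (hunion : GX ⊔ GY = ⊤)
    (hcomp : ∀ U : Set V, GX.IsCompOf U → ((GX.induce U) ⊓ GY).Connected) :
    CyclesDecompose G.edgeSet GX.edgeSet GY.edgeSet := by
  intro C hC
  rw [isF2CycleIn_iff] at hC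
  obtain ⟨hCG, hCodd⟩ := hC
  set A := C.filter (· ∈ GX.edgeSet)
  set A' := C.filter (· ∉ GX.edgeSet)
  have hAX : ↑A ⊆ GX.edgeSet := fun e he => (mem_filter.1 he).2
  have hA'Y : ↑A' ⊆ GY.edgeSet := fun e he => by
    have heG := hCG (mem_filter.1 he).1
    rw [← Subgraph.edgeSet_top, ← hunion, Subgraph.edgeSet_sup] at heG
    exact heG.resolve_left (mem_filter.1 he).2
  have hAA' : A ∆ A' = C := by
    rw [(disjoint_filter_filter_not C C _).symmDiff_eq_sup, sup_eq_union,
      filter_union_filter_not_eq]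
  have hoddA' : oddVerts A' = oddVerts A := by
    have := congrArg oddVerts hAA'
    rw [oddVerts_symmDiff, hCodd, ← bot_eq_empty, symmDiff_eq_bot] at this
    exact this.symm
  have hS : ∀ v ∈ oddVerts A, v ∈ GX.verts ∧ v ∈ GY.verts := fun v hv =>
    ⟨Subgraph.mem_verts_of_mem_oddVerts hAX hv,
      Subgraph.mem_verts_of_mem_oddVerts hA'Y (hoddA' ▸ hv)⟩
  obtain ⟨T, hT, hTodd⟩ := exists_oddVerts_eq_of_even GX.spanningCoe
    (GX.edgeSet ∩ GY.edgeSet) (oddVerts A)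
    (fun a ha b hb => exists_oddVerts_eq_pair_of_reachable hcomp (hS a ha).1 (hS a ha).2
      (hS b hb).2)
    (even_card_filter_oddVerts GX.spanningCoe (by simpa using hAX))
  refine ⟨A ∆ T, A' ∆ T, ?_, ?_, ?_⟩
  · rw [isF2CycleIn_iff, oddVerts_symmDiff, hTodd, symmDiff_self, coe_symmDiff]
    exact ⟨symmDiff_le_sup.trans (sup_le hAX (hT.trans Set.inter_subset_left)), rfl⟩
  · rw [isF2CycleIn_iff, oddVerts_symmDiff, hTodd, hoddA', symmDiff_self, coe_symmDiff]
    exact ⟨symmDiff_le_sup.trans (sup_le hA'Y (hT.trans Set.inter_subset_right)), rfl⟩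
  · rw [symmDiff_symmDiff_symmDiff_comm, symmDiff_self, symmDiff_bot, hAA']

end Decomposition

end SimpleGraph

/-- if `G = G_X ∪ G_Y` and for every connected component `U` of `G_X` the
graph `G_X[U] ∩ G_Y` is connected, then generating sets of the cycle spaces of `G_X` and
`G_Y` together generate the cycle space of `G`; in particular `bn(G) ≤ bn(G_X) + bn(G_Y)`. -/
theorem generates_union_of_components (G : SimpleGraph V) (GX GY : G.Subgraph)
    (hunion : GX ⊔ GY = ⊤)
    (hcomp : ∀ U : Set V, GX.IsCompOf U → ((GX.induce U) ⊓ GY).Connected)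
    (BX BY : List (Finset (Sym2 V)))
    (hBX : GeneratesIn GX.edgeSet BX) (hBY : GeneratesIn GY.edgeSet BY) :
    GeneratesIn G.edgeSet (BX ++ BY) ∧
      G.bn ≤ bnSet GX.edgeSet + bnSet GY.edgeSet := by
  have hdec := SimpleGraph.cyclesDecompose_of_isCompOf_connected hunion hcomp
  exact ⟨hdec.generatesIn_append hBX hBY, hdec.bnSet_le_add GX.edgeSet_subset GY.edgeSet_subset⟩
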